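/- arXiv:1908.03724 — 2 statements merged into one kernel-verified Lean document; each statement's English description precedes it below -/
import Mathlib

section
/- Let B = (b_1, …, b_n) ∈ ℝ^{m×n} be a basis of the lattice L = L(B), let δ ≥ 1, and let 2 ≤ i ≤ n. If B_{[i,n]} is δ-SVP-reduced and ‖b_i*‖ > δ·λ_1(L), then every vector v ∈ L with ‖v‖ = λ_1(L) satisfies π_i(v) = 0, i.e., v ∈ L(B_{[1,i−1]}); in particular, λ_1(L(B_{[1,i−1]})) = λ_1(L). -/
noncomputable section

/-- Euclidean space `ℝ^m`. -/
abbrev Euc (m : ℕ) : Type := EuclideanSpace ℝ (Fin m)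

variable {m : ℕ}

/-- `projGS B s` is the orthogonal projection `π_{s+1}` onto the subspace orthogonal to
`b_1, …, b_s` (0-based: orthogonal to `B 0, …, B (s-1)`). -/
def projGS (B : ℕ → Euc m) (s : ℕ) (x : Euc m) : Euc m :=
  (Submodule.orthogonalProjection ((Submodule.span ℝ (B '' Set.Iio s))ᗮ) x : Euc m)

/-- The Gram–Schmidt vector `b*_{i+1}` (0-based index `i`). -/
def gsoVec (B : ℕ → Euc m) (i : ℕ) : Euc m := projGS B i (B i)

/-- The projected block `B_{[s+1, s+ℓ]}` (0-based start `s`; the length is supplied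
separately to the predicates below). -/
def block (B : ℕ → Euc m) (s : ℕ) : ℕ → Euc m := fun t => projGS B s (B (s + t))

/-- Gram matrix of the first `ℓ` vectors. -/
def gram (B : ℕ → Euc m) (ℓ : ℕ) : Matrix (Fin ℓ) (Fin ℓ) ℝ :=
  Matrix.of fun i j => (inner ℝ (B i) (B j) : ℝ)

/-- `vol(L(B)) = det(BᵀB)^{1/2}` for the first `ℓ` vectors. -/
def volB (B : ℕ → Euc m) (ℓ : ℕ) : ℝ := Real.sqrt (gram B ℓ).det

/-- The lattice generated by the first `ℓ` vectors. -/
def latticeSpan (B : ℕ → Euc m) (ℓ : ℕ) : Submodule ℤ (Euc m) :=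
  Submodule.span ℤ (B '' Set.Iio ℓ)

/-- `λ₁(L)`: the minimum norm of a nonzero lattice vector. -/
def lambda1 (L : Submodule ℤ (Euc m)) : ℝ :=
  sInf {r : ℝ | ∃ x ∈ L, x ≠ 0 ∧ ‖x‖ = r}

/-- `B` (of rank `ℓ`) is `δ`-SVP-reduced. -/
def SVPReduced (δ : ℝ) (B : ℕ → Euc m) (ℓ : ℕ) : Prop :=
  ‖B 0‖ ≤ δ * lambda1 (latticeSpan B ℓ)

/-- `B` (of rank `ℓ`) is `δ`-HSVP-reduced. -/
def HSVPReduced (δ : ℝ) (B : ℕ → Euc m) (ℓ : ℕ) : Prop :=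
  ‖B 0‖ ≤ δ * volB B ℓ ^ ((1 : ℝ) / ℓ)

/-- The dual basis `B^× = B (BᵀB)⁻¹` of the first `ℓ` vectors (extended by `0`). -/
def dualFam (B : ℕ → Euc m) (ℓ : ℕ) : ℕ → Euc m := fun i =>
  if h : i < ℓ then ∑ j : Fin ℓ, ((gram B ℓ)⁻¹ j ⟨i, h⟩) • B j else 0

/-- The reversed dual basis `B^{-s}`. -/
def revDual (B : ℕ → Euc m) (ℓ : ℕ) : ℕ → Euc m := fun i => dualFam B ℓ (ℓ - 1 - i)

/-- `B` (of rank `ℓ`) is `δ`-DHSVP-reduced: its reversed dual basis is `δ`-HSVP-reduced. -/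
def DHSVPReduced (δ : ℝ) (B : ℕ → Euc m) (ℓ : ℕ) : Prop :=
  HSVPReduced δ (revDual B ℓ) ℓ

/-- `B = (b_1, …, b_{d+1})` is `δ`-twin-reduced: `B_{[1,d]}` is `δ`-HSVP-reduced and
`B_{[2,d+1]}` is `δ`-DHSVP-reduced. -/
def TwinReduced (δ : ℝ) (B : ℕ → Euc m) (d : ℕ) : Prop :=
  HSVPReduced δ (block B 0) d ∧ DHSVPReduced δ (block B 1) d

/-- Gram–Schmidt coefficient `μ_{i,j}` (0-based). -/
def mu (B : ℕ → Euc m) (i j : ℕ) : ℝ :=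
  (inner ℝ (B i) (gsoVec B j) : ℝ) / ‖gsoVec B j‖ ^ 2

/-- The first `ℓ` vectors are size-reduced. -/
def SizeReduced (B : ℕ → Euc m) (ℓ : ℕ) : Prop :=
  ∀ i j, j < i → i < ℓ → |mu B i j| ≤ 1 / 2

/-- The first `ℓ` vectors are `ε`-LLL-reduced. -/
def LLLReduced (ε : ℝ) (B : ℕ → Euc m) (ℓ : ℕ) : Prop :=
  SizeReduced B ℓ ∧
    ∀ i, 0 < i → i < ℓ →
      ‖gsoVec B (i - 1)‖ ^ 2 ≤ (1 + ε) * ‖mu B i (i - 1) • gsoVec B (i - 1) + gsoVec B i‖ ^ 2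

/-- `B` (of rank `ℓ`) is `δ`-DSVP-reduced: its reversed dual basis is `δ`-SVP-reduced
and `B` is `(1/3)`-LLL-reduced. -/
def DSVPReduced (δ : ℝ) (B : ℕ → Euc m) (ℓ : ℕ) : Prop :=
  SVPReduced δ (revDual B ℓ) ℓ ∧ LLLReduced (1 / 3) B ℓ

/-- `γ` is an admissible Hermite bound for rank `r`: every lattice generated by `r`
linearly independent vectors of a Euclidean space satisfies `λ₁² ≤ γ · vol^{2/r}`. -/
def IsHermiteBound (γ : ℝ) (r : ℕ) : Prop :=
  ∀ (m' : ℕ) (v : ℕ → Euc m'), LinearIndependent ℝ (fun i : Fin r => v i) →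
    lambda1 (latticeSpan v r) ^ 2 ≤ γ * volB v r ^ ((2 : ℝ) / r)


/-! The projection `π_i` maps `L` into `L(B_{[i,n]})` without increasing norms, so every
`v ∈ L` with `π_i(v) ≠ 0` has `‖v‖ ≥ λ₁(L(B_{[i,n]})) ≥ ‖b_i*‖ / δ > λ₁(L)`. Hence a shortest
vector satisfies `π_i(v) = 0`, i.e. lies in the real span of `b_1, …, b_{i-1}`; by linear
independence, an integer combination of the `b_j` lying there only involves `b_1, …, b_{i-1}`.
The same gap shows that vectors of `L` outside `L(B_{[1,i-1]})` cannot approach `λ₁(L)`, which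
gives the equality of minima. -/

section lambda1

variable {L L' : Submodule ℤ (Euc m)} {x : Euc m}

theorem lambda1_le_norm (hx : x ∈ L) (hx0 : x ≠ 0) : lambda1 L ≤ ‖x‖ :=
  csInf_le ⟨0, by rintro _ ⟨y, -, -, rfl⟩; exact norm_nonneg y⟩ ⟨x, hx, hx0, rfl⟩

theorem le_lambda1 (hx : x ∈ L) (hx0 : x ≠ 0) {c : ℝ} (h : ∀ y ∈ L, y ≠ 0 → c ≤ ‖y‖) :
    c ≤ lambda1 L :=
  le_csInf ⟨‖x‖, x, hx, hx0, rfl⟩ (by rintro r ⟨y, hy, hy0, rfl⟩; exact h y hy hy0)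

theorem lambda1_le_lambda1 (hle : L' ≤ L) (hx : x ∈ L') (hx0 : x ≠ 0) :
    lambda1 L ≤ lambda1 L' :=
  le_lambda1 hx hx0 fun _ hy hy0 => lambda1_le_norm (hle hy) hy0

/-- The minimum of `L` need not be attained here, so the proof bounds `min (λ₁ L') c` instead. -/
theorem lambda1_eq_of_forall_not_mem_le (hle : L' ≤ L) (hx : x ∈ L') (hx0 : x ≠ 0) {c : ℝ}
    (hc : lambda1 L < c) (hfar : ∀ y ∈ L, y ∉ L' → c ≤ ‖y‖) : lambda1 L' = lambda1 L := by
  refine le_antisymm (not_lt.mp fun hlt => ?_) (lambda1_le_lambda1 hle hx hx0)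
  have hmin : min (lambda1 L') c ≤ lambda1 L := by
    refine le_lambda1 (hle hx) hx0 fun y hy hy0 => ?_
    by_cases hy' : y ∈ L'
    · exact (min_le_left _ _).trans (lambda1_le_norm hy' hy0)
    · exact (min_le_right _ _).trans (hfar y hy hy')
  exact (lt_min hlt hc).not_ge hmin

end lambda1

theorem linearIndepOn_Iio {R M : Type*} [Ring R] [AddCommGroup M] [Module R M] {v : ℕ → M}
    {n : ℕ} (hv : LinearIndependent R (fun j : Fin n => v j)) : LinearIndepOn R v (Set.Iio n) :=
  (linearIndependent_equiv' (f := fun j : Set.Iio n => v j) Fin.equivSubtype rfl).mp hv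

section projGS

variable (B : ℕ → Euc m) {s n : ℕ}

theorem latticeSpan_mono (hsn : s ≤ n) : latticeSpan B s ≤ latticeSpan B n :=
  Submodule.span_mono (Set.image_mono (Set.Iio_subset_Iio hsn))

theorem latticeSpan_eq_sup (hsn : s ≤ n) :
    latticeSpan B n = latticeSpan B s ⊔ Submodule.span ℤ (B '' Set.Ico s n) := by
  rw [latticeSpan, latticeSpan, ← Submodule.span_union, ← Set.image_union,
    Set.Iio_union_Ico_eq_Iio hsn]

theorem projGS_eq_starProjection (s : ℕ) :
    projGS B s = (Submodule.span ℝ (B '' Set.Iio s))ᗮ.starProjection := rfl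

theorem projGS_eq_zero_iff {x : Euc m} :
    projGS B s x = 0 ↔ x ∈ Submodule.span ℝ (B '' Set.Iio s) := by
  rw [projGS_eq_starProjection, Submodule.starProjection_apply_eq_zero_iff,
    Submodule.orthogonal_orthogonal]

theorem norm_projGS_le (x : Euc m) : ‖projGS B s x‖ ≤ ‖x‖ :=
  Submodule.norm_starProjection_apply_le _ x

theorem projGS_mem_latticeSpan_block (hsn : s ≤ n) {v : Euc m} (hv : v ∈ latticeSpan B n) :
    projGS B s v ∈ latticeSpan (block B s) (n - s) := by
  have hmap := Submodule.apply_mem_span_image_of_mem_span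
    ((Submodule.span ℝ (B '' Set.Iio s))ᗮ.starProjection.toLinearMap.restrictScalars ℤ) hv
  refine Submodule.span_le.mpr ?_ hmap
  rintro _ ⟨_, ⟨j, hj, rfl⟩, rfl⟩
  change projGS B s (B j) ∈ _
  rcases lt_or_ge j s with hjs | hsj
  · rw [(projGS_eq_zero_iff B).mpr (Submodule.subset_span ⟨j, hjs, rfl⟩)]
    exact zero_mem _
  · refine Submodule.subset_span ⟨j - s, by rw [Set.mem_Iio] at hj ⊢; omega, ?_⟩
    rw [block, Nat.add_sub_cancel' hsj]

theorem lambda1_block_le_norm (hsn : s ≤ n) {v : Euc m} (hv : v ∈ latticeSpan B n)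
    (h0 : projGS B s v ≠ 0) : lambda1 (latticeSpan (block B s) (n - s)) ≤ ‖v‖ :=
  (lambda1_le_norm (projGS_mem_latticeSpan_block B hsn hv) h0).trans (norm_projGS_le B v)

/-- Write `v = u + w` with `u ∈ L(B_{[1,s]})` and `w` an integer combination of
`b_{s+1}, …, b_n`; then `w = v - u` lies in the real spans of both blocks, which intersect
trivially. -/
theorem mem_latticeSpan_of_projGS_eq_zero (hB : LinearIndependent ℝ (fun j : Fin n => B j))
    (hsn : s ≤ n) {v : Euc m} (hv : v ∈ latticeSpan B n) (h0 : projGS B s v = 0) :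
    v ∈ latticeSpan B s := by
  rw [latticeSpan_eq_sup B hsn, Submodule.mem_sup] at hv
  obtain ⟨u, hu, w, hw, rfl⟩ := hv
  have hst : Disjoint (Set.Iio s) (Set.Ico s n) :=
    (Set.Iio_disjoint_Ici le_rfl).mono_right Set.Ico_subset_Ici_self
  have hdisj :
      Disjoint (Submodule.span ℝ (B '' Set.Iio s)) (Submodule.span ℝ (B '' Set.Ico s n)) :=
    ((linearIndepOn_union_iff hst).mp
      ((linearIndepOn_Iio hB).mono (Set.Iio_union_Ico_eq_Iio hsn).le)).2.2
  have huR : u ∈ Submodule.span ℝ (B '' Set.Iio s) :=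
    Submodule.span_le_restrictScalars ℤ ℝ _ hu
  have hw0 : w = 0 := Submodule.disjoint_def.mp hdisj w
    (by simpa using sub_mem ((projGS_eq_zero_iff B).mp h0) huR)
    (Submodule.span_le_restrictScalars ℤ ℝ _ hw)
  simpa [hw0] using hu

end projGS

/-- if `B_{[i,n]}` is `δ`-SVP-reduced and `‖b_i*‖ > δ λ₁(L)`, then every
shortest nonzero vector of `L` lies in `L(B_{[1,i-1]})`; in particular
`λ₁(L(B_{[1,i-1]})) = λ₁(L)`. -/
theorem shortest_in_prefix {m n i : ℕ} (hi2 : 2 ≤ i) (hin : i ≤ n) {δ : ℝ} (hδ : 1 ≤ δ)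
    (B : ℕ → Euc m) (hB : LinearIndependent ℝ (fun j : Fin n => B j))
    (hblock : SVPReduced δ (block B (i - 1)) (n - (i - 1)))
    (hbig : δ * lambda1 (latticeSpan B n) < ‖gsoVec B (i - 1)‖) :
    (∀ v ∈ latticeSpan B n, ‖v‖ = lambda1 (latticeSpan B n) →
        projGS B (i - 1) v = 0 ∧ v ∈ latticeSpan B (i - 1)) ∧
      lambda1 (latticeSpan B (i - 1)) = lambda1 (latticeSpan B n) := by
  have hsn : i - 1 ≤ n := by omega
  have hgap :
      lambda1 (latticeSpan B n) < lambda1 (latticeSpan (block B (i - 1)) (n - (i - 1))) :=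
    lt_of_mul_lt_mul_left (hbig.trans_le hblock) (by linarith)
  have hfar : ∀ v ∈ latticeSpan B n, projGS B (i - 1) v ≠ 0 →
      lambda1 (latticeSpan (block B (i - 1)) (n - (i - 1))) ≤ ‖v‖ :=
    fun v hv => lambda1_block_le_norm B hsn hv
  have hproj :
      ∀ v ∈ latticeSpan B n, ‖v‖ = lambda1 (latticeSpan B n) → projGS B (i - 1) v = 0 :=
    fun v hv hnorm => by_contra fun h => (hfar v hv h).not_gt (hnorm ▸ hgap)
  refine ⟨fun v hv hnorm => ⟨hproj v hv hnorm,
    mem_latticeSpan_of_projGS_eq_zero B hB hsn hv (hproj v hv hnorm)⟩, ?_⟩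
  have hB0 : B 0 ≠ 0 := by simpa using hB.ne_zero ⟨0, by omega⟩
  refine lambda1_eq_of_forall_not_mem_le (latticeSpan_mono B hsn)
    (Submodule.subset_span ⟨0, Set.mem_Iio.mpr (by omega), rfl⟩) hB0 hgap fun y hy hy' => ?_
  exact hfar y hy (mt (mem_latticeSpan_of_projGS_eq_zero B hB hsn hy) hy')

end
end

section
/- Let 2 ≤ q ≤ k be integers, let η ≥ 1 and M > 0, and let B = (b_1, …, b_n) ∈ ℝ^{m×n} be a basis with n ≥ max{k, q+1}. If B_{[1,q+1]} is η-twin-reduced and ‖b_i*‖ ≤ M for every i ∈ [q+1, max{k, q+1}], then vol(L(B_{[1,k]})) ≤ η^{q(q+1)/(q−1)} · M^k. -/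
/-!
Gram–Schmidt turns every quantity in the statement into a product of the norms `‖b_i*‖`:
`vol(L(B_{[1,k]})) = ∏_{i ≤ k} ‖b_i*‖`, the projected block `B_{[2,q+1]}` has Gram–Schmidt
vectors `b_2*, …, b_{q+1}*`, and the reversed dual of a block has volume the inverse volume and
first vector `b_last* / ‖b_last*‖²`. Writing `x = ‖b_1*‖`, `y = ‖b_{q+1}*‖`, `P = ∏_{i ≤ q} ‖b_i*‖`
and `Q = ∏_{2 ≤ i ≤ q+1} ‖b_i*‖`, twin-reduction says `x^q ≤ η^q P` and `Q ≤ η^q y^q`, while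
`P y = x Q`. Eliminating `x` gives `P^{q-1} ≤ η^{q(q+1)} y^{q(q-1)}`, and the factors
`‖b_i*‖` with `i > q` are at most `M`.
-/

noncomputable section

variable {m : ℕ}

open Submodule InnerProductSpace Finset

theorem Submodule.mem_orthogonal_span_of_inner_eq_zero {𝕜 E : Type*} [RCLike 𝕜]
    [NormedAddCommGroup E] [InnerProductSpace 𝕜 E] {S : Set E} {w : E}
    (h : ∀ u ∈ S, inner 𝕜 u w = 0) : w ∈ (span 𝕜 S)ᗮ := by
  refine isOrtho_span.2 ?_ (mem_span_singleton_self w)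
  rintro _ rfl u hu
  rw [inner_eq_zero_symm]
  exact h u hu

namespace InnerProductSpace

section GramSchmidt

variable {𝕜 E ι : Type*} [RCLike 𝕜] [NormedAddCommGroup E] [InnerProductSpace 𝕜 E]
  [LinearOrder ι] [LocallyFiniteOrderBot ι] [WellFoundedLT ι]

theorem gramSchmidt_mem_orthogonal_span (v : ι → E) (i : ι) :
    gramSchmidt 𝕜 v i ∈ (span 𝕜 (v '' Set.Iio i))ᗮ := by
  rw [← span_gramSchmidt_Iio]
  refine mem_orthogonal_span_of_inner_eq_zero ?_
  rintro _ ⟨j, hj, rfl⟩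
  exact gramSchmidt_orthogonal 𝕜 v (ne_of_lt hj)

theorem sub_gramSchmidt_mem_span (v : ι → E) (i : ι) :
    v i - gramSchmidt 𝕜 v i ∈ span 𝕜 (v '' Set.Iio i) := by
  rw [← span_gramSchmidt_Iio, gramSchmidt_def 𝕜 v i, sub_sub_cancel]
  refine sum_mem fun j hj => ?_
  rw [starProjection_singleton]
  exact smul_mem _ _ (subset_span ⟨j, mem_Iio.1 hj, rfl⟩)

theorem inner_gramSchmidt_self (v : ι → E) (i : ι) :
    inner 𝕜 (gramSchmidt 𝕜 v i) (v i) = (‖gramSchmidt 𝕜 v i‖ : 𝕜) ^ 2 := by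
  have h := inner_left_of_mem_orthogonal (sub_gramSchmidt_mem_span (𝕜 := 𝕜) v i)
    (gramSchmidt_mem_orthogonal_span v i)
  rwa [inner_sub_right, inner_self_eq_norm_sq_to_K, sub_eq_zero] at h

end GramSchmidt

variable {E ι : Type*} [NormedAddCommGroup E] [InnerProductSpace ℝ E]
  [Fintype ι] [LinearOrder ι] [LocallyFiniteOrderBot ι]

theorem det_gram_eq_prod_norm_gramSchmidt_sq (v : ι → E) :
    (Matrix.gram ℝ v).det = ∏ i, ‖gramSchmidt ℝ v i‖ ^ 2 := by
  set u := gramSchmidt ℝ v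
  -- `v = u T` with `T` unit upper triangular, so `gram v = Tᵀ diag(‖u k‖²) T`.
  let T : Matrix ι ι ℝ := .of fun k j => if k = j then 1 else inner ℝ (u k) (v j) / ‖u k‖ ^ 2
  have inner_eq (k j : ι) : inner ℝ (u k) (v j) = ‖u k‖ ^ 2 * T k j := by
    by_cases hkj : k = j
    · subst hkj
      simp [T, u, inner_gramSchmidt_self]
    by_cases hk : u k = 0
    · simp [hk]
    · simp only [T, Matrix.of_apply, if_neg hkj]
      field_simp
  have T_upper : T.IsUpperTriangular := by
    intro k j (hjk : j < k)
    simp [T, hjk.ne', gramSchmidt_inv_triangular ℝ v hjk, u]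
  have expand (j : ι) : v j = ∑ k, T k j • u k := by
    rw [← sum_subset (subset_univ (Iic j))]
    · rw [← Iio_insert, sum_insert notMem_Iio_self]
      conv_lhs => rw [gramSchmidt_def'' ℝ v j]
      refine congrArg₂ _ (by simp [T, u]) (sum_congr rfl fun k hk => ?_)
      simp [T, u, (mem_Iio.1 hk).ne]
    · intro k _ hk
      simp [T_upper (not_le.1 (by simpa using hk))]
  have gram_eq : Matrix.gram ℝ v = T.transpose * Matrix.diagonal (fun k => ‖u k‖ ^ 2) * T := by
    ext i j
    rw [Matrix.gram_apply, Matrix.mul_assoc, Matrix.mul_apply]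
    conv_lhs => rw [expand i]
    simp [sum_inner, real_inner_smul_left, inner_eq, Matrix.diagonal_mul]
  rw [gram_eq, Matrix.det_mul, Matrix.det_mul, Matrix.det_transpose, Matrix.det_diagonal,
    Matrix.det_of_isUpperTriangular T_upper]
  simp [T]

end InnerProductSpace

theorem gsoVec_mem_orthogonal (B : ℕ → Euc m) (i : ℕ) :
    gsoVec B i ∈ (span ℝ (B '' Set.Iio i))ᗮ :=
  ((span ℝ (B '' Set.Iio i))ᗮ.orthogonalProjectionOnto (B i)).2

theorem sub_gsoVec_mem_span (B : ℕ → Euc m) (i : ℕ) :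
    B i - gsoVec B i ∈ span ℝ (B '' Set.Iio i) := by
  have h := sub_starProjection_mem_orthogonal (K := (span ℝ (B '' Set.Iio i))ᗮ) (B i)
  rwa [orthogonal_orthogonal] at h

theorem gsoVec_eq_of_mem {B : ℕ → Euc m} {i : ℕ} {w : Euc m}
    (hw : w ∈ (span ℝ (B '' Set.Iio i))ᗮ) (hsub : B i - w ∈ span ℝ (B '' Set.Iio i)) :
    gsoVec B i = w :=
  eq_starProjection_of_mem_orthogonal hw (by rwa [orthogonal_orthogonal])

theorem gsoVec_eq_gramSchmidt (B : ℕ → Euc m) {ℓ : ℕ} (t : Fin ℓ) :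
    gsoVec B t = gramSchmidt ℝ (fun i : Fin ℓ => B i) t := by
  have himage : (fun i : Fin ℓ => B i) '' Set.Iio t = B '' Set.Iio t := by
    ext x
    constructor
    · rintro ⟨j, hj, rfl⟩
      exact ⟨j, hj, rfl⟩
    · rintro ⟨j, hj, rfl⟩
      exact ⟨⟨j, hj.trans t.2⟩, hj, rfl⟩
  apply gsoVec_eq_of_mem <;> rw [← himage]
  · exact gramSchmidt_mem_orthogonal_span _ t
  · exact sub_gramSchmidt_mem_span _ t

theorem gsoVec_ne_zero {n : ℕ} {B : ℕ → Euc m} (hB : LinearIndependent ℝ (fun i : Fin n => B i))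
    {i : ℕ} (hi : i < n) : gsoVec B i ≠ 0 := by
  simpa [← gsoVec_eq_gramSchmidt] using gramSchmidt_ne_zero (⟨i, hi⟩ : Fin n) hB

theorem det_gram_eq_prod (B : ℕ → Euc m) (ℓ : ℕ) :
    (gram B ℓ).det = ∏ i ∈ range ℓ, ‖gsoVec B i‖ ^ 2 := by
  rw [show gram B ℓ = Matrix.gram ℝ (fun i : Fin ℓ => B i) from rfl,
    det_gram_eq_prod_norm_gramSchmidt_sq, ← Fin.prod_univ_eq_prod_range (fun i => ‖gsoVec B i‖ ^ 2)]
  simp only [gsoVec_eq_gramSchmidt]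

theorem volB_eq_prod (B : ℕ → Euc m) (ℓ : ℕ) : volB B ℓ = ∏ i ∈ range ℓ, ‖gsoVec B i‖ := by
  rw [volB, det_gram_eq_prod, prod_pow, Real.sqrt_sq (prod_nonneg fun _ _ => norm_nonneg _)]

@[simp]
theorem block_apply_zero (B : ℕ → Euc m) (s : ℕ) : block B s 0 = gsoVec B s := rfl

theorem gsoVec_block (B : ℕ → Euc m) (s t : ℕ) : gsoVec (block B s) t = gsoVec B (s + t) := by
  set π := (span ℝ (B '' Set.Iio s))ᗮ.starProjection
  have hw : gsoVec B (s + t) ∈ (span ℝ (B '' Set.Iio s))ᗮ :=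
    orthogonal_le (span_mono (Set.image_mono (Set.Iio_subset_Iio (Nat.le_add_right s t))))
      (gsoVec_mem_orthogonal B (s + t))
  have hπw : π (gsoVec B (s + t)) = gsoVec B (s + t) := starProjection_eq_self_iff.2 hw
  apply gsoVec_eq_of_mem
  · refine mem_orthogonal_span_of_inner_eq_zero ?_
    rintro _ ⟨j, hj, rfl⟩
    show inner ℝ (π (B (s + j))) (gsoVec B (s + t)) = 0
    rw [inner_starProjection_left_eq_right, hπw]
    have hmem : B (s + j) ∈ span ℝ (B '' Set.Iio (s + t)) :=
      subset_span ⟨s + j, by simpa using hj, rfl⟩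
    exact inner_right_of_mem_orthogonal hmem (gsoVec_mem_orthogonal B (s + t))
  · show π (B (s + t)) - gsoVec B (s + t) ∈ _
    have hspan : span ℝ (B '' Set.Iio (s + t)) ≤
        (span ℝ (block B s '' Set.Iio t)).comap π.toLinearMap := by
      rw [span_le]
      rintro _ ⟨r, hr, rfl⟩
      rcases lt_or_ge r s with hrs | hrs
      · have hr : B r ∈ span ℝ (B '' Set.Iio s) := subset_span ⟨r, hrs, rfl⟩
        have hπr : π (B r) = 0 :=
          (starProjection_apply_eq_zero_iff _).2 (le_orthogonal_orthogonal _ hr)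
        simp [hπr]
      · obtain ⟨j, rfl⟩ := Nat.exists_eq_add_of_le hrs
        exact subset_span ⟨j, by simpa using hr, rfl⟩
    simpa [hπw] using hspan (sub_gsoVec_mem_span B (s + t))

theorem inner_gsoVec_self (B : ℕ → Euc m) (i : ℕ) :
    inner ℝ (gsoVec B i) (B i) = ‖gsoVec B i‖ ^ 2 := by
  have h := inner_left_of_mem_orthogonal (sub_gsoVec_mem_span B i) (gsoVec_mem_orthogonal B i)
  rwa [inner_sub_right, real_inner_self_eq_norm_sq, sub_eq_zero] at h

section Dual

variable {C : ℕ → Euc m} {ℓ : ℕ}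

theorem gsoVec_ne_zero_of_det_gram_ne_zero (hC : (gram C ℓ).det ≠ 0) {i : ℕ} (hi : i < ℓ) :
    gsoVec C i ≠ 0 := by
  rw [det_gram_eq_prod, prod_ne_zero_iff] at hC
  exact norm_ne_zero_iff.1 (pow_ne_zero_iff two_ne_zero |>.1 (hC i (mem_range.2 hi)))

theorem inner_dualFam (hC : (gram C ℓ).det ≠ 0) (i j : Fin ℓ) :
    inner ℝ (C j) (dualFam C ℓ i) = if j = i then 1 else 0 := by
  have h := congrFun₂ (Matrix.mul_nonsing_inv (gram C ℓ) (isUnit_iff_ne_zero.2 hC)) j i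
  simp only [Matrix.mul_apply, Matrix.one_apply] at h
  rw [← h, dualFam, dif_pos i.2, inner_sum]
  exact sum_congr rfl fun r _ => by rw [real_inner_smul_right, mul_comm]; rfl

theorem gram_dualFam (hC : (gram C ℓ).det ≠ 0) : gram (dualFam C ℓ) ℓ = (gram C ℓ)⁻¹ := by
  ext i j
  show inner ℝ (dualFam C ℓ i) (dualFam C ℓ j) = (gram C ℓ)⁻¹ i j
  rw [show dualFam C ℓ j = ∑ r : Fin ℓ, (gram C ℓ)⁻¹ r j • C r from dif_pos j.2]
  rw [inner_sum, sum_eq_single i]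
  · rw [real_inner_smul_right, real_inner_comm, inner_dualFam hC, if_pos rfl, mul_one]
  · intro r _ hr
    rw [real_inner_smul_right, real_inner_comm, inner_dualFam hC, if_neg hr, mul_zero]
  · simp

theorem volB_revDual (hC : (gram C ℓ).det ≠ 0) : volB (revDual C ℓ) ℓ = (volB C ℓ)⁻¹ := by
  have hrev : gram (revDual C ℓ) ℓ = (gram (dualFam C ℓ) ℓ).submatrix Fin.revPerm Fin.revPerm := by
    have hval (t : Fin ℓ) : ℓ - 1 - (t : ℕ) = (Fin.rev t : ℕ) := by rw [Fin.val_rev]; omega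
    ext i j
    simp only [gram, revDual, Matrix.of_apply, Matrix.submatrix_apply, Fin.revPerm_apply, hval]
  rw [volB, hrev, Matrix.det_submatrix_equiv_self, gram_dualFam hC, Matrix.det_nonsing_inv,
    Ring.inverse_eq_inv', Real.sqrt_inv, volB]

theorem dualFam_last (hC : (gram C ℓ).det ≠ 0) (hℓ : 0 < ℓ) :
    dualFam C ℓ (ℓ - 1) = (‖gsoVec C (ℓ - 1)‖ ^ 2)⁻¹ • gsoVec C (ℓ - 1) := by
  set K := span ℝ (C '' Set.Iio ℓ)
  set g := gsoVec C (ℓ - 1)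
  have hlast : ℓ - 1 < ℓ := by omega
  have hg : ‖g‖ ≠ 0 := norm_ne_zero_iff.2 (gsoVec_ne_zero_of_det_gram_ne_zero hC hlast)
  have hK : span ℝ (C '' Set.Iio (ℓ - 1)) ≤ K :=
    span_mono (Set.image_mono (Set.Iio_subset_Iio hlast.le))
  have hd : dualFam C ℓ (ℓ - 1) ∈ K := by
    rw [dualFam, dif_pos hlast]
    exact sum_mem fun r _ => smul_mem _ _ (subset_span ⟨r, r.2, rfl⟩)
  have hgK : g ∈ K := by
    have hClast : C (ℓ - 1) ∈ K := subset_span ⟨ℓ - 1, hlast, rfl⟩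
    simpa using sub_mem hClast (hK (sub_gsoVec_mem_span C (ℓ - 1)))
  have horth : dualFam C ℓ (ℓ - 1) - (‖g‖ ^ 2)⁻¹ • g ∈ Kᗮ := by
    refine mem_orthogonal_span_of_inner_eq_zero ?_
    rintro _ ⟨j, hj, rfl⟩
    rw [inner_sub_right, inner_dualFam hC ⟨ℓ - 1, hlast⟩ ⟨j, hj⟩, real_inner_smul_right]
    rcases eq_or_lt_of_le (Nat.le_sub_one_of_lt hj) with rfl | hj'
    · rw [real_inner_comm, inner_gsoVec_self]
      field_simp
      simp [g]
    · have hCj : C j ∈ span ℝ (C '' Set.Iio (ℓ - 1)) := subset_span ⟨j, hj', rfl⟩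
      rw [inner_right_of_mem_orthogonal hCj (gsoVec_mem_orthogonal C (ℓ - 1)),
        if_neg (by simp [Fin.ext_iff, hj'.ne])]
      ring
  have := mem_inf.2 ⟨sub_mem hd (smul_mem _ _ hgK), horth⟩
  rwa [inf_orthogonal_eq_bot, mem_bot, sub_eq_zero] at this

theorem dhsvpReduced_iff {δ : ℝ} (hC : (gram C ℓ).det ≠ 0) (hℓ : 0 < ℓ) :
    DHSVPReduced δ C ℓ ↔ ‖gsoVec C (ℓ - 1)‖⁻¹ ≤ δ * (volB C ℓ)⁻¹ ^ ((1 : ℝ) / ℓ) := by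
  have hg := gsoVec_ne_zero_of_det_gram_ne_zero hC (Nat.sub_one_lt_of_lt hℓ)
  rw [DHSVPReduced, HSVPReduced, volB_revDual hC, revDual, Nat.sub_zero, dualFam_last hC hℓ,
    norm_smul, norm_inv, norm_pow, norm_norm, sq, mul_inv, mul_assoc,
    inv_mul_cancel₀ (norm_ne_zero_iff.2 hg), mul_one]

end Dual

theorem pow_le_of_twin_bounds {x y P Q c : ℝ} {p : ℕ} (hx : 0 < x) (hy : 0 < y) (hP : 0 ≤ P)
    (h₁ : x ^ (p + 1) ≤ c * P) (h₂ : Q ≤ c * y ^ (p + 1)) (hPQ : P * y = x * Q) :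
    P ^ p ≤ c ^ (p + 2) * y ^ (p * (p + 1)) := by
  have hc : 0 < c := pos_of_mul_pos_left ((pow_pos hx _).trans_le h₁) hP
  have hP' : P ≤ c * x * y ^ p := by
    refine le_of_mul_le_mul_right ?_ hy
    calc P * y = x * Q := hPQ
      _ ≤ x * (c * y ^ (p + 1)) := by gcongr
      _ = c * x * y ^ p * y := by ring
  have hx' : x ^ p ≤ c ^ 2 * y ^ p := by
    refine le_of_mul_le_mul_right ?_ hx
    calc x ^ p * x = x ^ (p + 1) := by ring
      _ ≤ c * P := h₁
      _ ≤ c * (c * x * y ^ p) := by gcongr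
      _ = c ^ 2 * y ^ p * x := by ring
  calc P ^ p ≤ (c * x * y ^ p) ^ p := by gcongr
    _ = c ^ p * y ^ (p * p) * x ^ p := by ring
    _ ≤ c ^ p * y ^ (p * p) * (c ^ 2 * y ^ p) := by gcongr
    _ = c ^ (p + 2) * y ^ (p * (p + 1)) := by ring

theorem pow_le_of_le_mul_rpow_inv {x η P : ℝ} {q : ℕ} (hq : q ≠ 0) (hx : 0 ≤ x) (hP : 0 ≤ P)
    (h : x ≤ η * P ^ ((1 : ℝ) / q)) : x ^ q ≤ η ^ q * P := by
  calc x ^ q ≤ (η * P ^ ((1 : ℝ) / q)) ^ q := by gcongr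
    _ = η ^ q * P := by rw [mul_pow, one_div, Real.rpow_inv_natCast_pow hP hq]

-- `x, y, P, Q` play the roles of `‖b_1*‖`, `‖b_{q+1}*‖`, `vol B_{[1,q]}` and `vol B_{[2,q+1]}`.
theorem le_rpow_mul_pow_of_twin_bounds {q : ℕ} (hq : 2 ≤ q) {η x y P Q : ℝ} (hx : 0 < x)
    (hy : 0 < y) (hP : 0 < P) (hQ : 0 < Q) (h₁ : x ≤ η * P ^ ((1 : ℝ) / q))
    (h₂ : y⁻¹ ≤ η * Q⁻¹ ^ ((1 : ℝ) / q)) (hPQ : P * y = x * Q) :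
    P ≤ η ^ ((q : ℝ) * (q + 1) / (q - 1)) * y ^ q := by
  have hη : 0 < η := pos_of_mul_pos_left (hx.trans_le h₁) (by positivity)
  have h₁' := pow_le_of_le_mul_rpow_inv (by omega) hx.le hP.le h₁
  have h₂' : Q ≤ η ^ q * y ^ q := by
    have := pow_le_of_le_mul_rpow_inv (by omega) (inv_nonneg.2 hy.le) (inv_nonneg.2 hQ.le) h₂
    rw [inv_pow] at this
    calc Q = Q * y ^ q * (y ^ q)⁻¹ := by field_simp
      _ ≤ Q * y ^ q * (η ^ q * Q⁻¹) := by gcongr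
      _ = η ^ q * y ^ q := by field_simp
  obtain ⟨p, rfl⟩ : ∃ p, q = p + 2 := ⟨q - 2, by omega⟩
  have core := pow_le_of_twin_bounds (p := p + 1) hx hy hP.le h₁' h₂' hPQ
  refine le_of_pow_le_pow_left₀ (n := p + 1) (by omega) (by positivity) (core.trans_eq ?_)
  rw [mul_pow, ← Real.rpow_mul_natCast hη.le, ← pow_mul, ← pow_mul, ← Real.rpow_natCast]
  push_cast
  have hp : (p : ℝ) + 2 - 1 ≠ 0 := by linarith [p.cast_nonneg (α := ℝ)]
  congr 2
  · field_simp
    ring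
  · ring

namespace TwinReduced

variable {δ : ℝ} {B : ℕ → Euc m} {d : ℕ}

theorem norm_gsoVec_zero_le (h : TwinReduced δ B d) :
    ‖gsoVec B 0‖ ≤ δ * (∏ i ∈ range d, ‖gsoVec B i‖) ^ ((1 : ℝ) / d) := by
  simpa [HSVPReduced, volB_eq_prod, gsoVec_block] using h.1

theorem inv_norm_gsoVec_le (h : TwinReduced δ B d) (hd : 0 < d)
    (hB : ∀ i < d, gsoVec B (i + 1) ≠ 0) :
    ‖gsoVec B d‖⁻¹ ≤ δ * (∏ i ∈ range d, ‖gsoVec B (i + 1)‖)⁻¹ ^ ((1 : ℝ) / d) := by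
  have hdet : (gram (block B 1) d).det ≠ 0 := by
    rw [det_gram_eq_prod, prod_ne_zero_iff]
    intro i hi
    rw [gsoVec_block, add_comm]
    exact pow_ne_zero _ (norm_ne_zero_iff.2 (hB i (mem_range.1 hi)))
  simpa [volB_eq_prod, gsoVec_block, Nat.add_sub_cancel' hd, add_comm 1] using
    (dhsvpReduced_iff hdet hd).1 h.2

theorem volB_le (h : TwinReduced δ B d) (hd : 2 ≤ d) (hB : ∀ i ≤ d, gsoVec B i ≠ 0) :
    volB B d ≤ δ ^ ((d : ℝ) * (d + 1) / (d - 1)) * ‖gsoVec B d‖ ^ d := by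
  have hpos {i : ℕ} (hi : i ≤ d) : 0 < ‖gsoVec B i‖ := norm_pos_iff.2 (hB i hi)
  rw [volB_eq_prod]
  refine le_rpow_mul_pow_of_twin_bounds hd (hpos (Nat.zero_le d)) (hpos le_rfl)
    (prod_pos fun i hi => hpos (by simp at hi; omega))
    (prod_pos fun i hi => hpos (by simp at hi; omega))
    h.norm_gsoVec_zero_le (h.inv_norm_gsoVec_le (by omega) fun i hi => hB _ hi) ?_
  rw [← prod_range_succ, prod_range_succ', mul_comm]

end TwinReduced

theorem prefix_volume_bound_general {m k q n : ℕ} (hq2 : 2 ≤ q) (hqk : q ≤ k)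
    (hn : max k (q + 1) ≤ n) {η M : ℝ}
    (B : ℕ → Euc m) (hB : LinearIndependent ℝ (fun i : Fin n => B i))
    (hTwin : TwinReduced η B q)
    (hbound : ∀ i, q + 1 ≤ i → i ≤ max k (q + 1) → ‖gsoVec B (i - 1)‖ ≤ M) :
    volB B k ≤ η ^ (((q : ℝ) * ((q : ℝ) + 1)) / ((q : ℝ) - 1)) * M ^ k := by
  have hnz {i : ℕ} (hi : i ≤ q) : gsoVec B i ≠ 0 := gsoVec_ne_zero hB (by omega)
  have hM {i : ℕ} (hqi : q ≤ i) (hik : i < max k (q + 1)) : ‖gsoVec B i‖ ≤ M := by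
    simpa using hbound (i + 1) (by omega) (by omega)
  have hη : 0 < η := pos_of_mul_pos_left
    ((norm_pos_iff.2 (hnz q.zero_le)).trans_le hTwin.norm_gsoVec_zero_le) (by positivity)
  have hM0 : 0 ≤ M := (norm_nonneg _).trans (hM le_rfl (by omega))
  have htail : ∏ i ∈ Ico q k, ‖gsoVec B i‖ ≤ M ^ (k - q) := by
    simpa using prod_le_prod (fun i _ => norm_nonneg _)
      fun i hi => hM (mem_Ico.1 hi).1 (by simp at hi; omega)
  calc volB B k = volB B q * ∏ i ∈ Ico q k, ‖gsoVec B i‖ := by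
        rw [volB_eq_prod, volB_eq_prod, prod_range_mul_prod_Ico _ hqk]
    _ ≤ η ^ (((q : ℝ) * ((q : ℝ) + 1)) / ((q : ℝ) - 1)) * ‖gsoVec B q‖ ^ q * M ^ (k - q) :=
        mul_le_mul (hTwin.volB_le hq2 fun i hi => hnz hi) htail
          (prod_nonneg fun _ _ => norm_nonneg _) (by positivity)
    _ ≤ η ^ (((q : ℝ) * ((q : ℝ) + 1)) / ((q : ℝ) - 1)) * M ^ q * M ^ (k - q) := by
        gcongr
        exact hM le_rfl (by omega)
    _ = η ^ (((q : ℝ) * ((q : ℝ) + 1)) / ((q : ℝ) - 1)) * M ^ k := by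
        rw [mul_assoc, ← pow_add, Nat.add_sub_cancel' hqk]

/-- if `B_{[1,q+1]}` is `η`-twin-reduced and `‖b_i*‖ ≤ M` for all
`i ∈ [q+1, max{k,q+1}]`, then `vol(L(B_{[1,k]})) ≤ η^{q(q+1)/(q-1)} M^k`. -/
theorem prefix_volume_bound {m k q n : ℕ} (hq2 : 2 ≤ q) (hqk : q ≤ k)
    (hn : max k (q + 1) ≤ n) {η M : ℝ} (hη : 1 ≤ η) (hM : 0 < M)
    (B : ℕ → Euc m) (hB : LinearIndependent ℝ (fun i : Fin n => B i))
    (hTwin : TwinReduced η B q)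
    (hbound : ∀ i, q + 1 ≤ i → i ≤ max k (q + 1) → ‖gsoVec B (i - 1)‖ ≤ M) :
    volB B k ≤ η ^ (((q : ℝ) * ((q : ℝ) + 1)) / ((q : ℝ) - 1)) * M ^ k :=
  prefix_volume_bound_general hq2 hqk hn B hB hTwin hbound
end
end
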